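/- arXiv:1711.01339 — 6 statements merged into one kernel-verified Lean document; each statement's English description precedes it below -/
import Mathlib

section
/- Let ℓ ≥ 2 and let K ∈ GL(ℓ,F₂). Fix α ∈ (0,1), ρ ∈ (0,1), P_e ∈ (0,1), and z ∈ [0,1]. Assume: (i) the process polarizes, i.e. for every z₀ ∈ [0,1], the limit as m' → ∞ of P_{z₀}{Z_{m'} ≤ ℓ^{−m'}} exists and equals 1 − z₀; and (ii) for all m ≥ 1, E_z[g_α(Z_m)] ≤ ℓ^{−mρ}. Then for every m ≥ 1, P_z{Z_m ≤ P_e·ℓ^{−m}} ≥ 1 − z − (2·P_e^{−α} + P_e)·ℓ^{−m(ρ−α)}. -/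
open scoped Classical

noncomputable section

/-- Bit `i` (0-indexed; it represents the 1-indexed bit `i+1`) is decodable under the
kernel `K` and the erasure set `S`. -/
def Decodable (ℓ : ℕ) (K : Matrix (Fin ℓ) (Fin ℓ) (ZMod 2)) (i : Fin ℓ)
    (S : Finset (Fin ℓ)) : Prop :=
  ∀ u u' : Fin ℓ → ZMod 2,
    (∀ j : Fin ℓ, j < i → u j = u' j) →
    (∀ j : Fin ℓ, j ∉ S → Matrix.vecMul u K j = Matrix.vecMul u' K j) →
    u i = u' i

/-- The polarization behavior `f_{K,i}(z)` of the kernel `K`. -/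
def fK (ℓ : ℕ) (K : Matrix (Fin ℓ) (Fin ℓ) (ZMod 2)) (i : Fin ℓ) (z : ℝ) : ℝ :=
  ∑ S : Finset (Fin ℓ),
    if ¬ Decodable ℓ K i S then z ^ S.card * (1 - z) ^ (ℓ - S.card) else 0

/-- The polarization process `Z_m(z, b)`. -/
def Zproc (ℓ : ℕ) (K : Matrix (Fin ℓ) (Fin ℓ) (ZMod 2)) (z : ℝ) :
    (m : ℕ) → (Fin m → Fin ℓ) → ℝ
  | 0, _ => z
  | m + 1, b => fK ℓ K (b (Fin.last m)) (Zproc ℓ K z m (fun j => b j.castSucc))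

/-- `g_α(z) = z^α (1-z)^α`. -/
def gfun (α z : ℝ) : ℝ := z ^ α * (1 - z) ^ α

/-- `λ_{α,K}(z)`. -/
def lam (ℓ : ℕ) (K : Matrix (Fin ℓ) (Fin ℓ) (ZMod 2)) (α z : ℝ) : ℝ :=
  ((1 / (ℓ : ℝ)) * ∑ i : Fin ℓ, gfun α (fK ℓ K i z)) / gfun α z

/-- `λ*_{α,K} = sup_{z ∈ (0,1)} λ_{α,K}(z)`. -/
def lamStar (ℓ : ℕ) (K : Matrix (Fin ℓ) (Fin ℓ) (ZMod 2)) (α : ℝ) : ℝ :=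
  sSup (lam ℓ K α '' Set.Ioo 0 1)

/-- `E_z[h(Z_m)]`, the uniform average over branch sequences `b`. -/
def expZ (ℓ : ℕ) (K : Matrix (Fin ℓ) (Fin ℓ) (ZMod 2)) (z : ℝ) (m : ℕ) (h : ℝ → ℝ) : ℝ :=
  (∑ b : Fin m → Fin ℓ, h (Zproc ℓ K z m b)) / (ℓ : ℝ) ^ m


/-- `P_z{Z_m ∈ A}`, the fraction of branch sequences `b ∈ {1,…,ℓ}^m` with `Z_m(z,b) ∈ A`. -/
def probZ (ℓ : ℕ) (K : Matrix (Fin ℓ) (Fin ℓ) (ZMod 2)) (z : ℝ) (m : ℕ) (A : Set ℝ) : ℝ :=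
  ((Finset.univ.filter (fun b : Fin m → Fin ℓ => Zproc ℓ K z m b ∈ A)).card : ℝ) / (ℓ : ℝ) ^ m

section Aux

variable {ℓ : ℕ} (M : Matrix (Fin ℓ) (Fin ℓ) (ZMod 2))

lemma sum_subsets_one (ℓ : ℕ) (z : ℝ) :
    ∑ S : Finset (Fin ℓ), z ^ S.card * (1 - z) ^ (ℓ - S.card) = 1 := by
  have h := Finset.prod_add (fun _ : Fin ℓ => z) (fun _ : Fin ℓ => (1 : ℝ) - z) Finset.univ
  have h1 : z + (1 - z) = (1 : ℝ) := by ring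
  rw [h1] at h
  simp only [Finset.prod_const, Finset.prod_const_one, Finset.powerset_univ, one_pow] at h
  calc ∑ S : Finset (Fin ℓ), z ^ S.card * (1 - z) ^ (ℓ - S.card)
      = ∑ S : Finset (Fin ℓ), z ^ S.card * (1 - z) ^ (Finset.univ \ S).card := by
        apply Finset.sum_congr rfl
        intro S _
        rw [Finset.card_sdiff_of_subset (Finset.subset_univ S), Finset.card_univ, Fintype.card_fin]
    _ = 1 := h.symm

lemma fK_mem {z : ℝ} (hz : z ∈ Set.Icc (0 : ℝ) 1) (i : Fin ℓ) :
    fK ℓ M i z ∈ Set.Icc (0 : ℝ) 1 := by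
  obtain ⟨h0, h1⟩ := hz
  have hterm : ∀ S : Finset (Fin ℓ), 0 ≤ z ^ S.card * (1 - z) ^ (ℓ - S.card) := fun S =>
    mul_nonneg (pow_nonneg h0 _) (pow_nonneg (by linarith) _)
  constructor
  · apply Finset.sum_nonneg
    intro S _
    split
    · exact hterm S
    · exact le_rfl
  · refine le_trans ?_ (le_of_eq (sum_subsets_one ℓ z))
    apply Finset.sum_le_sum
    intro S _
    split
    · exact le_rfl
    · exact hterm S

lemma Zproc_mem {z : ℝ} (hz : z ∈ Set.Icc (0 : ℝ) 1) :
    ∀ (m : ℕ) (b : Fin m → Fin ℓ), Zproc ℓ M z m b ∈ Set.Icc (0 : ℝ) 1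
  | 0, _ => hz
  | m + 1, b => fK_mem M (Zproc_mem hz m _) _

lemma Zproc_snoc (z : ℝ) (m : ℕ) (b : Fin m → Fin ℓ) (x : Fin ℓ) :
    Zproc ℓ M z (m + 1) (Fin.snoc b x) = fK ℓ M x (Zproc ℓ M z m b) := by
  simp only [Zproc, Fin.snoc_last, Fin.snoc_castSucc]

lemma Zproc_append (z : ℝ) :
    ∀ (n m : ℕ) (b : Fin m → Fin ℓ) (c : Fin n → Fin ℓ),
      Zproc ℓ M z (m + n) (Fin.append b c) = Zproc ℓ M (Zproc ℓ M z m b) n c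
  | 0, m, b, c => by
      have hc : Fin.append b c = b := by
        funext i
        have hi : i = Fin.castAdd 0 i := Fin.ext rfl
        conv_lhs => rw [hi]
        exact Fin.append_left b c i
      rw [hc]
      rfl
  | n + 1, m, b, c => by
      have ih := Zproc_append z n m b (Fin.init c)
      calc Zproc ℓ M z (m + (n + 1)) (Fin.append b c)
          = Zproc ℓ M z ((m + n) + 1)
              (Fin.snoc (Fin.append b (Fin.init c)) (c (Fin.last n))) := by
            rw [← Fin.append_snoc, Fin.snoc_init_self]
            rfl
        _ = fK ℓ M (c (Fin.last n)) (Zproc ℓ M z (m + n) (Fin.append b (Fin.init c))) :=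
            Zproc_snoc M z (m + n) _ _
        _ = fK ℓ M (c (Fin.last n)) (Zproc ℓ M (Zproc ℓ M z m b) n (Fin.init c)) := by rw [ih]
        _ = Zproc ℓ M (Zproc ℓ M z m b) (n + 1) c := by
            rw [← Zproc_snoc M _ n (Fin.init c) (c (Fin.last n)), Fin.snoc_init_self]

set_option maxHeartbeats 1000000 in
lemma card_decomp (z : ℝ) (m n : ℕ) {T T' : ℝ} (hT : T ≤ T') :
    ((Finset.univ.filter
        (fun c : Fin (m + n) → Fin ℓ => Zproc ℓ M z (m + n) c ∈ {x : ℝ | x ≤ T})).card : ℝ) ≤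
      ∑ b : Fin m → Fin ℓ,
        ((Finset.univ.filter
          (fun c : Fin n → Fin ℓ =>
            Zproc ℓ M (Zproc ℓ M z m b) n c ∈ {x : ℝ | x ≤ T'})).card : ℝ) := by
  have key : ∀ p : (Fin m → Fin ℓ) × (Fin n → Fin ℓ),
      Zproc ℓ M z (m + n) (Fin.append p.1 p.2) = Zproc ℓ M (Zproc ℓ M z m p.1) n p.2 :=
    fun p => Zproc_append M z n m p.1 p.2
  have e1 : ((Finset.univ.filter
        (fun c : Fin (m + n) → Fin ℓ => Zproc ℓ M z (m + n) c ∈ {x : ℝ | x ≤ T})).card : ℝ) =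
      ∑ c : Fin (m + n) → Fin ℓ, if Zproc ℓ M z (m + n) c ≤ T then (1 : ℝ) else 0 := by
    simp only [Finset.card_filter, Nat.cast_sum, Nat.cast_ite, Nat.cast_one, Nat.cast_zero,
      Set.mem_setOf_eq]
  have e2 : ∑ c : Fin (m + n) → Fin ℓ, (if Zproc ℓ M z (m + n) c ≤ T then (1 : ℝ) else 0) =
      ∑ p : (Fin m → Fin ℓ) × (Fin n → Fin ℓ),
        (if Zproc ℓ M (Zproc ℓ M z m p.1) n p.2 ≤ T then (1 : ℝ) else 0) := by
    refine (Fintype.sum_equiv (Fin.appendEquiv m n) _ _ ?_).symm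
    intro p
    simp only [Fin.appendEquiv, Equiv.coe_fn_mk, key p]
  rw [e1, e2, Fintype.sum_prod_type]
  apply Finset.sum_le_sum
  intro b _
  simp only [Finset.card_filter, Nat.cast_sum, Nat.cast_ite, Nat.cast_one, Nat.cast_zero,
    Set.mem_setOf_eq]
  apply Finset.sum_le_sum
  intro c _
  split_ifs with h1 h2 h2
  · exact le_rfl
  · exact absurd (le_trans h1 hT) h2
  · norm_num
  · exact le_rfl

lemma sum_Zproc_le (hℓ : 2 ≤ ℓ) {z : ℝ} (hz : z ∈ Set.Icc (0 : ℝ) 1)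
    (hpol : ∀ z₀ ∈ Set.Icc (0 : ℝ) 1,
      Filter.Tendsto
        (fun m' : ℕ => probZ ℓ M z₀ m' {x | x ≤ (ℓ : ℝ) ^ (-(m' : ℤ))})
        Filter.atTop (nhds (1 - z₀)))
    (m : ℕ) :
    ∑ b : Fin m → Fin ℓ, Zproc ℓ M z m b ≤ z * (ℓ : ℝ) ^ m := by
  have hℓ1 : (1 : ℝ) ≤ (ℓ : ℝ) := by
    have : (2 : ℝ) ≤ (ℓ : ℝ) := by exact_mod_cast hℓ
    linarith
  have hℓ0 : (0 : ℝ) < (ℓ : ℝ) := by linarith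
  have hpm : (0 : ℝ) < (ℓ : ℝ) ^ m := pow_pos hℓ0 m
  set F : ℕ → ℝ := fun n => probZ ℓ M z (m + n) {x | x ≤ (ℓ : ℝ) ^ (-((m + n : ℕ) : ℤ))}
    with hF
  set G : ℕ → ℝ := fun n =>
    (∑ b : Fin m → Fin ℓ,
      probZ ℓ M (Zproc ℓ M z m b) n {x | x ≤ (ℓ : ℝ) ^ (-(n : ℤ))}) / (ℓ : ℝ) ^ m with hG
  have hFG : ∀ n, F n ≤ G n := by
    intro n
    have hT : (ℓ : ℝ) ^ (-((m + n : ℕ) : ℤ)) ≤ (ℓ : ℝ) ^ (-(n : ℤ)) := by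
      apply zpow_le_zpow_right₀ hℓ1
      push_cast
      omega
    have hcd := card_decomp M z m n hT
    have hGn : G n = (∑ b : Fin m → Fin ℓ,
        ((Finset.univ.filter
          (fun c : Fin n → Fin ℓ =>
            Zproc ℓ M (Zproc ℓ M z m b) n c ∈
              {x : ℝ | x ≤ (ℓ : ℝ) ^ (-(n : ℤ))})).card : ℝ)) / (ℓ : ℝ) ^ (m + n) := by
      simp only [hG, probZ]
      rw [← Finset.sum_div, div_div, ← pow_add, add_comm n m]
    rw [hGn]
    simp only [hF, probZ]
    gcongr
  have hFlim : Filter.Tendsto F Filter.atTop (nhds (1 - z)) := by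
    have hcomp : Filter.Tendsto (fun n : ℕ => m + n) Filter.atTop Filter.atTop :=
      Filter.tendsto_atTop_mono (fun n => Nat.le_add_left n m) Filter.tendsto_id
    exact (hpol z hz).comp hcomp
  have hGlim : Filter.Tendsto G Filter.atTop
      (nhds ((∑ b : Fin m → Fin ℓ, (1 - Zproc ℓ M z m b)) / (ℓ : ℝ) ^ m)) := by
    apply Filter.Tendsto.div_const
    apply tendsto_finset_sum
    intro b _
    exact hpol (Zproc ℓ M z m b) (Zproc_mem M hz m b)
  have hle : 1 - z ≤ (∑ b : Fin m → Fin ℓ, (1 - Zproc ℓ M z m b)) / (ℓ : ℝ) ^ m :=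
    le_of_tendsto_of_tendsto' hFlim hGlim hFG
  have hsum : ∑ b : Fin m → Fin ℓ, (1 - Zproc ℓ M z m b) =
      (ℓ : ℝ) ^ m - ∑ b : Fin m → Fin ℓ, Zproc ℓ M z m b := by
    rw [Finset.sum_sub_distrib, Finset.sum_const, Finset.card_univ]
    simp [Fintype.card_fun]
  rw [hsum, le_div_iff₀ hpm] at hle
  nlinarith

lemma markov_pt {α t x : ℝ} (hα : α ∈ Set.Ioo (0 : ℝ) 1) (ht : 0 < t)
    (hx : x ∈ Set.Icc (0 : ℝ) 1) (hxt : ¬x ≤ t) : (1 : ℝ) ≤ x + t ^ (-α) * gfun α x := by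
  obtain ⟨hα0, hα1⟩ := hα
  obtain ⟨hx0, hx1⟩ := hx
  push_neg at hxt
  have htα : (0 : ℝ) < t ^ α := Real.rpow_pos_of_pos ht α
  have h1 : t ^ α ≤ x ^ α := Real.rpow_le_rpow ht.le hxt.le hα0.le
  have h2 : (1 : ℝ) - x ≤ (1 - x) ^ α := by
    rcases eq_or_lt_of_le hx1 with h | h
    · simp [← h, Real.zero_rpow (ne_of_gt hα0)]
    · have h1x : (0 : ℝ) < 1 - x := by linarith
      calc (1 : ℝ) - x = (1 - x) ^ (1 : ℝ) := (Real.rpow_one _).symm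
        _ ≤ (1 - x) ^ α := Real.rpow_le_rpow_of_exponent_ge h1x (by linarith) hα1.le
  have hneg : t ^ (-α) = (t ^ α)⁻¹ := Real.rpow_neg ht.le α
  have key : 1 - x ≤ t ^ (-α) * gfun α x := by
    rw [hneg, gfun]
    have hga : (1 : ℝ) - x ≤ x ^ α * (1 - x) ^ α / t ^ α := by
      rw [le_div_iff₀ htα]
      calc (1 - x) * t ^ α ≤ (1 - x) ^ α * (x ^ α) := by
            apply mul_le_mul h2 h1 htα.le (Real.rpow_nonneg (by linarith) α)
        _ = x ^ α * (1 - x) ^ α := mul_comm _ _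
    calc (1 : ℝ) - x ≤ x ^ α * (1 - x) ^ α / t ^ α := hga
      _ = (t ^ α)⁻¹ * (x ^ α * (1 - x) ^ α) := by ring
  linarith

theorem stmt2 (ℓ : ℕ) (hℓ : 2 ≤ ℓ) (K : Matrix.GeneralLinearGroup (Fin ℓ) (ZMod 2))
    (α ρ Pe : ℝ) (hα : α ∈ Set.Ioo (0 : ℝ) 1) (hρ : ρ ∈ Set.Ioo (0 : ℝ) 1)
    (hPe : Pe ∈ Set.Ioo (0 : ℝ) 1) (z : ℝ) (hz : z ∈ Set.Icc (0 : ℝ) 1)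
    (hpol : ∀ z₀ ∈ Set.Icc (0 : ℝ) 1,
      Filter.Tendsto
        (fun m' : ℕ => probZ ℓ (K : Matrix (Fin ℓ) (Fin ℓ) (ZMod 2)) z₀ m'
          {x | x ≤ (ℓ : ℝ) ^ (-(m' : ℤ))})
        Filter.atTop (nhds (1 - z₀)))
    (hE : ∀ m : ℕ, 1 ≤ m →
      expZ ℓ (K : Matrix (Fin ℓ) (Fin ℓ) (ZMod 2)) z m (gfun α) ≤
        (ℓ : ℝ) ^ (-(m : ℝ) * ρ)) :
    ∀ m : ℕ, 1 ≤ m →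
      probZ ℓ (K : Matrix (Fin ℓ) (Fin ℓ) (ZMod 2)) z m
          {x | x ≤ Pe * (ℓ : ℝ) ^ (-(m : ℤ))} ≥
        1 - z - (2 * Pe ^ (-α) + Pe) * (ℓ : ℝ) ^ (-(m : ℝ) * (ρ - α)) := by
  intro m hm
  set M := (K : Matrix (Fin ℓ) (Fin ℓ) (ZMod 2)) with hM
  have hℓ1 : (1 : ℝ) < (ℓ : ℝ) := by
    have : (2 : ℝ) ≤ (ℓ : ℝ) := by exact_mod_cast hℓ
    linarith
  have hℓ0 : (0 : ℝ) < (ℓ : ℝ) := by linarith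
  have hpm : (0 : ℝ) < (ℓ : ℝ) ^ m := pow_pos hℓ0 m
  set t : ℝ := Pe * (ℓ : ℝ) ^ (-(m : ℤ)) with ht
  have ht0 : 0 < t := mul_pos hPe.1 (zpow_pos hℓ0 _)
  set N := Finset.univ.filter (fun b : Fin m → Fin ℓ => Zproc ℓ M z m b ∈ {x : ℝ | x ≤ t})
    with hN
  set Nc := Finset.univ.filter (fun b : Fin m → Fin ℓ => ¬ Zproc ℓ M z m b ∈ {x : ℝ | x ≤ t})
    with hNc
  have hgoal : probZ ℓ M z m {x : ℝ | x ≤ t} = (N.card : ℝ) / (ℓ : ℝ) ^ m := rfl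
  have hcard : N.card + Nc.card = ℓ ^ m := by
    rw [hN, hNc, Finset.card_filter_add_card_filter_not, Finset.card_univ]
    simp [Fintype.card_fun]
  have hcast : (N.card : ℝ) + (Nc.card : ℝ) = (ℓ : ℝ) ^ m := by exact_mod_cast hcard
  -- Markov bound on Nc
  have hmark : (Nc.card : ℝ) ≤
      ∑ b : Fin m → Fin ℓ, (Zproc ℓ M z m b + t ^ (-α) * gfun α (Zproc ℓ M z m b)) := by
    have hNceq : (Nc.card : ℝ) =
        ∑ b : Fin m → Fin ℓ, (if Zproc ℓ M z m b ≤ t then (0 : ℝ) else 1) := by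
      rw [hNc, Finset.card_filter]
      push_cast
      apply Finset.sum_congr rfl
      intro b _
      by_cases h : Zproc ℓ M z m b ≤ t <;> simp [h, Set.mem_setOf_eq]
    rw [hNceq]
    apply Finset.sum_le_sum
    intro b _
    have hb := Zproc_mem M hz m b
    have hg : 0 ≤ gfun α (Zproc ℓ M z m b) :=
      mul_nonneg (Real.rpow_nonneg hb.1 α) (Real.rpow_nonneg (by linarith [hb.2]) α)
    have htneg : 0 ≤ t ^ (-α) := Real.rpow_nonneg ht0.le _
    have hprod : 0 ≤ t ^ (-α) * gfun α (Zproc ℓ M z m b) := mul_nonneg htneg hg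
    split_ifs with h
    · linarith [hb.1]
    · linarith [markov_pt hα ht0 hb h]
  have hsum1 : ∑ b : Fin m → Fin ℓ, Zproc ℓ M z m b ≤ z * (ℓ : ℝ) ^ m :=
    sum_Zproc_le M hℓ hz hpol m
  have hsum2 : ∑ b : Fin m → Fin ℓ, gfun α (Zproc ℓ M z m b) ≤
      (ℓ : ℝ) ^ (-(m : ℝ) * ρ) * (ℓ : ℝ) ^ m := by
    have h := hE m hm
    rw [expZ, div_le_iff₀ hpm] at h
    exact h
  have htneg : 0 ≤ t ^ (-α) := Real.rpow_nonneg ht0.le _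
  have hNcle : (Nc.card : ℝ) ≤
      z * (ℓ : ℝ) ^ m + t ^ (-α) * ((ℓ : ℝ) ^ (-(m : ℝ) * ρ) * (ℓ : ℝ) ^ m) := by
    calc (Nc.card : ℝ) ≤ _ := hmark
      _ = (∑ b : Fin m → Fin ℓ, Zproc ℓ M z m b) +
          t ^ (-α) * ∑ b : Fin m → Fin ℓ, gfun α (Zproc ℓ M z m b) := by
        rw [Finset.sum_add_distrib, Finset.mul_sum]
      _ ≤ _ := add_le_add hsum1 (mul_le_mul_of_nonneg_left hsum2 htneg)
  -- the key rpow computation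
  have hz1 : ((ℓ : ℝ) ^ (-(m : ℤ))) = (ℓ : ℝ) ^ (-(m : ℝ)) := by
    rw [← Real.rpow_intCast (ℓ : ℝ) (-(m : ℤ))]
    push_cast
    ring_nf
  have h2 : t ^ (-α) = Pe ^ (-α) * (ℓ : ℝ) ^ ((m : ℝ) * α) := by
    rw [ht, hz1, Real.mul_rpow hPe.1.le (Real.rpow_nonneg hℓ0.le _),
      ← Real.rpow_mul hℓ0.le]
    congr 1
    ring
  have h3 : t ^ (-α) * (ℓ : ℝ) ^ (-(m : ℝ) * ρ) =
      Pe ^ (-α) * (ℓ : ℝ) ^ (-(m : ℝ) * (ρ - α)) := by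
    rw [h2, mul_assoc, ← Real.rpow_add hℓ0]
    congr 2
    ring
  have hL : 0 ≤ (ℓ : ℝ) ^ (-(m : ℝ) * (ρ - α)) := Real.rpow_nonneg hℓ0.le _
  have hPa : 0 ≤ Pe ^ (-α) := Real.rpow_nonneg hPe.1.le _
  have hkey : t ^ (-α) * (ℓ : ℝ) ^ (-(m : ℝ) * ρ) ≤
      (2 * Pe ^ (-α) + Pe) * (ℓ : ℝ) ^ (-(m : ℝ) * (ρ - α)) := by
    rw [h3]
    apply mul_le_mul_of_nonneg_right _ hL
    linarith [hPe.1.le]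
  -- final assembly
  rw [ge_iff_le, hgoal]
  have hNcdiv : (Nc.card : ℝ) / (ℓ : ℝ) ^ m ≤
      z + t ^ (-α) * (ℓ : ℝ) ^ (-(m : ℝ) * ρ) := by
    rw [div_le_iff₀ hpm]
    calc (Nc.card : ℝ) ≤ _ := hNcle
      _ = (z + t ^ (-α) * (ℓ : ℝ) ^ (-(m : ℝ) * ρ)) * (ℓ : ℝ) ^ m := by ring
  have hX : (N.card : ℝ) / (ℓ : ℝ) ^ m = 1 - (Nc.card : ℝ) / (ℓ : ℝ) ^ m := by
    field_simp
    linarith [hcast]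
  rw [hX]
  linarith [hNcdiv, hkey]

end Aux

end
end

section
/- Let ℓ ≥ 1, let K ∈ GL(ℓ,F₂), and fix α ∈ (0,1) and z ∈ (0,1). Then for every m ≥ 0, E_z[g_α(Z_m)] ≤ (λ*_{α,K})^m · g_α(z). -/
open scoped Classical

noncomputable section

/-! The one-step transition of the process averages `h ∘ f_{K,i}` over `i`, and on `(0,1)` the
average of `g_α ∘ f_{K,i}` is `λ_{α,K} g_α ≤ λ* g_α`; induction on `m` gives the bound.
Invertibility of `K` makes bit `i` decodable without erasures, and no bit is decodable when
everything is erased, so `z^ℓ ≤ f_{K,i}(z) ≤ 1 - (1-z)^ℓ`. Hence each `f_{K,i}` maps `(0,1)` into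
itself, and with Bernoulli's inequality `g_α ∘ f_{K,i} ≤ ℓ^{2α} g_α`, so `λ*` is a genuine
supremum. -/

open Finset

section Decoding

variable {ℓ : ℕ} {K : Matrix (Fin ℓ) (Fin ℓ) (ZMod 2)} {i : Fin ℓ}

lemma decodable_empty (hK : IsUnit K) : Decodable ℓ K i ∅ := fun _ _ _ hS =>
  congrFun (Matrix.vecMul_injective_of_isUnit hK (funext fun j => hS j (notMem_empty j))) i

lemma not_decodable_univ : ¬ Decodable ℓ K i univ := by
  intro h
  have := h (Pi.single i 1) 0 (fun j hj => by simp [hj.ne])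
    (fun j hj => absurd (mem_univ j) hj)
  simp at this

end Decoding

/-- The probability that the binary erasure channel with erasure probability `z` erases exactly
the coordinates in `S`. -/
def erasureWeight (ℓ : ℕ) (z : ℝ) (S : Finset (Fin ℓ)) : ℝ :=
  z ^ S.card * (1 - z) ^ (ℓ - S.card)

section ErasureWeight

variable {ℓ : ℕ} {z : ℝ}

lemma sum_erasureWeight (ℓ : ℕ) (z : ℝ) : ∑ S, erasureWeight ℓ z S = 1 := by
  simpa [erasureWeight, card_compl] using (Fintype.prod_add (fun _ : Fin ℓ => z) fun _ => 1 - z).symm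

lemma erasureWeight_nonneg (hz : z ∈ Set.Icc 0 1) (S : Finset (Fin ℓ)) :
    0 ≤ erasureWeight ℓ z S :=
  mul_nonneg (pow_nonneg hz.1 _) (pow_nonneg (sub_nonneg.2 hz.2) _)

@[simp] lemma erasureWeight_empty : erasureWeight ℓ z ∅ = (1 - z) ^ ℓ := by
  simp [erasureWeight]

@[simp] lemma erasureWeight_univ : erasureWeight ℓ z univ = z ^ ℓ := by
  simp [erasureWeight]

lemma erasureWeight_le_sum {𝒜 : Finset (Finset (Fin ℓ))} {T : Finset (Fin ℓ)} (hT : T ∈ 𝒜)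
    (hz : z ∈ Set.Icc 0 1) : erasureWeight ℓ z T ≤ ∑ S ∈ 𝒜, erasureWeight ℓ z S :=
  single_le_sum (fun S _ => erasureWeight_nonneg hz S) hT

lemma sum_erasureWeight_le_one_sub {𝒜 : Finset (Finset (Fin ℓ))} {T : Finset (Fin ℓ)}
    (hT : T ∉ 𝒜) (hz : z ∈ Set.Icc 0 1) :
    ∑ S ∈ 𝒜, erasureWeight ℓ z S ≤ 1 - erasureWeight ℓ z T := by
  have : ∑ S ∈ insert T 𝒜, erasureWeight ℓ z S ≤ 1 :=
    (sum_le_univ_sum_of_nonneg (erasureWeight_nonneg hz)).trans_eq (sum_erasureWeight ℓ z)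
  rw [sum_insert hT] at this
  linarith

end ErasureWeight

section PolarizationBehavior

variable {ℓ : ℕ} {K : Matrix (Fin ℓ) (Fin ℓ) (ZMod 2)} {i : Fin ℓ} {z : ℝ}

lemma fK_eq_sum_erasureWeight :
    fK ℓ K i z = ∑ S ∈ univ.filter (¬ Decodable ℓ K i ·), erasureWeight ℓ z S := by
  rw [sum_filter]
  rfl

lemma pow_le_fK (hz : z ∈ Set.Icc 0 1) : z ^ ℓ ≤ fK ℓ K i z := by
  rw [fK_eq_sum_erasureWeight, ← erasureWeight_univ]
  exact erasureWeight_le_sum (by simpa using not_decodable_univ) hz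

lemma fK_le_one_sub_pow (hK : IsUnit K) (hz : z ∈ Set.Icc 0 1) :
    fK ℓ K i z ≤ 1 - (1 - z) ^ ℓ := by
  rw [fK_eq_sum_erasureWeight, ← erasureWeight_empty]
  exact sum_erasureWeight_le_one_sub (by simpa using decodable_empty hK) hz

lemma fK_mem_Ioo (hK : IsUnit K) (hz : z ∈ Set.Ioo 0 1) : fK ℓ K i z ∈ Set.Ioo 0 1 := by
  have h₀ := pow_le_fK (K := K) (i := i) (Set.Ioo_subset_Icc_self hz)
  have h₁ := fK_le_one_sub_pow (i := i) hK (Set.Ioo_subset_Icc_self hz)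
  have : 0 < z ^ ℓ := pow_pos hz.1 ℓ
  have : 0 < (1 - z) ^ ℓ := pow_pos (sub_pos.2 hz.2) ℓ
  constructor <;> linarith

lemma fK_le_mul (hK : IsUnit K) (hz : z ∈ Set.Icc 0 1) : fK ℓ K i z ≤ ℓ * z := by
  have := one_add_mul_le_pow (a := -z) (by linarith [hz.2]) ℓ
  rw [← sub_eq_add_neg] at this
  linarith [fK_le_one_sub_pow (i := i) hK hz]

lemma one_sub_fK_le_mul (hz : z ∈ Set.Icc 0 1) : 1 - fK ℓ K i z ≤ ℓ * (1 - z) := by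
  have := one_add_mul_le_pow (a := z - 1) (by linarith [hz.1]) ℓ
  rw [add_sub_cancel] at this
  linarith [pow_le_fK (K := K) (i := i) hz]

end PolarizationBehavior

section Gfun

variable {α x y c : ℝ}

lemma gfun_eq_rpow_mul (hx : x ∈ Set.Icc 0 1) : gfun α x = (x * (1 - x)) ^ α :=
  (Real.mul_rpow hx.1 (sub_nonneg.2 hx.2)).symm

lemma gfun_pos (hx : x ∈ Set.Ioo 0 1) : 0 < gfun α x :=
  mul_pos (Real.rpow_pos_of_pos hx.1 α) (Real.rpow_pos_of_pos (sub_pos.2 hx.2) α)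

lemma gfun_le_of_le_mul (hα : 0 ≤ α) (hx : x ∈ Set.Icc 0 1) (hy : y ∈ Set.Icc 0 1)
    (hc : 0 ≤ c) (h₀ : x ≤ c * y) (h₁ : 1 - x ≤ c * (1 - y)) :
    gfun α x ≤ (c ^ 2) ^ α * gfun α y := by
  have hxx : 0 ≤ x * (1 - x) := mul_nonneg hx.1 (sub_nonneg.2 hx.2)
  have hyy : 0 ≤ y * (1 - y) := mul_nonneg hy.1 (sub_nonneg.2 hy.2)
  have : x * (1 - x) ≤ c ^ 2 * (y * (1 - y)) := by
    nlinarith [mul_le_mul h₀ h₁ (sub_nonneg.2 hx.2) (mul_nonneg hc hy.1)]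
  rw [gfun_eq_rpow_mul hx, gfun_eq_rpow_mul hy, ← Real.mul_rpow (by positivity) hyy]
  exact Real.rpow_le_rpow hxx this hα

end Gfun

section PolarizationProcess

variable {ℓ : ℕ} {K : Matrix (Fin ℓ) (Fin ℓ) (ZMod 2)} {α z : ℝ}

lemma Zproc_mem_Ioo (hK : IsUnit K) (hz : z ∈ Set.Ioo 0 1) :
    ∀ (m : ℕ) (b : Fin m → Fin ℓ), Zproc ℓ K z m b ∈ Set.Ioo 0 1
  | 0, _ => hz
  | m + 1, _ => fK_mem_Ioo hK (Zproc_mem_Ioo hK hz m _)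

lemma sum_Zproc_succ (h : ℝ → ℝ) (m : ℕ) :
    ∑ b : Fin (m + 1) → Fin ℓ, h (Zproc ℓ K z (m + 1) b) =
      ∑ b : Fin m → Fin ℓ, ∑ i, h (fK ℓ K i (Zproc ℓ K z m b)) := by
  rw [← (Fin.snocEquiv fun _ => Fin ℓ).sum_comp, Fintype.sum_prod_type, sum_comm]
  simp [Zproc]

lemma expZ_succ (h : ℝ → ℝ) (m : ℕ) :
    expZ ℓ K z (m + 1) h = expZ ℓ K z m fun w => 1 / ℓ * ∑ i, h (fK ℓ K i w) := by
  simp only [expZ, sum_Zproc_succ, ← mul_sum, pow_succ, ← div_div]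
  ring

lemma expZ_const_mul (c : ℝ) (h : ℝ → ℝ) (m : ℕ) :
    expZ ℓ K z m (fun w => c * h w) = c * expZ ℓ K z m h := by
  simp only [expZ, ← mul_sum, mul_div_assoc]

lemma expZ_mono (hK : IsUnit K) (hz : z ∈ Set.Ioo 0 1) {h₁ h₂ : ℝ → ℝ}
    (h : ∀ w ∈ Set.Ioo 0 1, h₁ w ≤ h₂ w) (m : ℕ) : expZ ℓ K z m h₁ ≤ expZ ℓ K z m h₂ :=
  div_le_div_of_nonneg_right (sum_le_sum fun b _ => h _ (Zproc_mem_Ioo hK hz m b))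
    (by positivity)

end PolarizationProcess

section Lambda

variable {ℓ : ℕ} {K : Matrix (Fin ℓ) (Fin ℓ) (ZMod 2)} {α w : ℝ}

lemma lam_nonneg (hK : IsUnit K) (hw : w ∈ Set.Ioo 0 1) : 0 ≤ lam ℓ K α w :=
  div_nonneg (mul_nonneg (by positivity)
    (sum_nonneg fun _ _ => (gfun_pos (fK_mem_Ioo hK hw)).le)) (gfun_pos hw).le

lemma lam_le (hK : IsUnit K) (hα : 0 ≤ α) (hw : w ∈ Set.Ioo 0 1) :
    lam ℓ K α w ≤ ((ℓ : ℝ) ^ 2) ^ α := by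
  have hw' := Set.Ioo_subset_Icc_self hw
  have hg : ∀ i, gfun α (fK ℓ K i w) ≤ ((ℓ : ℝ) ^ 2) ^ α * gfun α w := fun i =>
    gfun_le_of_le_mul hα (Set.Ioo_subset_Icc_self (fK_mem_Ioo hK hw)) hw' (by positivity)
      (fK_le_mul hK hw') (one_sub_fK_le_mul hw')
  rw [lam, div_le_iff₀ (gfun_pos hw)]
  rcases Nat.eq_zero_or_pos ℓ with rfl | hℓ
  · simpa using mul_nonneg (Real.rpow_nonneg le_rfl α) (gfun_pos hw).le
  calc 1 / (ℓ : ℝ) * ∑ i, gfun α (fK ℓ K i w)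
      ≤ 1 / ℓ * ∑ _i : Fin ℓ, ((ℓ : ℝ) ^ 2) ^ α * gfun α w :=
        mul_le_mul_of_nonneg_left (sum_le_sum fun i _ => hg i) (by positivity)
    _ = ((ℓ : ℝ) ^ 2) ^ α * gfun α w := by
        rw [sum_const, card_univ, Fintype.card_fin, nsmul_eq_mul]
        field_simp

lemma bddAbove_lam (hK : IsUnit K) (hα : 0 ≤ α) : BddAbove (lam ℓ K α '' Set.Ioo 0 1) :=
  ⟨_, Set.forall_mem_image.2 fun _ hw => lam_le hK hα hw⟩

lemma lamStar_nonneg (hK : IsUnit K) : 0 ≤ lamStar ℓ K α :=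
  Real.sSup_nonneg (Set.forall_mem_image.2 fun _ hw => lam_nonneg hK hw)

lemma average_gfun_fK_le (hK : IsUnit K) (hα : 0 ≤ α) (hw : w ∈ Set.Ioo 0 1) :
    1 / ℓ * ∑ i, gfun α (fK ℓ K i w) ≤ lamStar ℓ K α * gfun α w := by
  rw [← div_le_iff₀ (gfun_pos hw)]
  exact le_csSup (bddAbove_lam hK hα) (Set.mem_image_of_mem _ hw)

end Lambda

theorem stmt4_general (ℓ : ℕ) (K : Matrix.GeneralLinearGroup (Fin ℓ) (ZMod 2))
    (α : ℝ) (hα : α ∈ Set.Ioo (0 : ℝ) 1) (z : ℝ) (hz : z ∈ Set.Ioo (0 : ℝ) 1) :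
    ∀ m : ℕ, expZ ℓ (K : Matrix (Fin ℓ) (Fin ℓ) (ZMod 2)) z m (gfun α) ≤
      (lamStar ℓ (K : Matrix (Fin ℓ) (Fin ℓ) (ZMod 2)) α) ^ m * gfun α z := by
  intro m
  induction m with
  | zero => simp [expZ, Zproc]
  | succ m ih =>
    calc expZ ℓ K z (m + 1) (gfun α)
        = expZ ℓ K z m fun w => 1 / ℓ * ∑ i, gfun α (fK ℓ K i w) := expZ_succ _ m
      _ ≤ expZ ℓ K z m fun w => lamStar ℓ K α * gfun α w :=
        expZ_mono K.isUnit hz (fun _ hw => average_gfun_fK_le K.isUnit hα.1.le hw) m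
      _ = lamStar ℓ K α * expZ ℓ K z m (gfun α) := expZ_const_mul _ _ m
      _ ≤ lamStar ℓ K α * (lamStar ℓ K α ^ m * gfun α z) :=
        mul_le_mul_of_nonneg_left ih (lamStar_nonneg K.isUnit)
      _ = lamStar ℓ K α ^ (m + 1) * gfun α z := by ring

theorem stmt4 (ℓ : ℕ) (hℓ : 1 ≤ ℓ) (K : Matrix.GeneralLinearGroup (Fin ℓ) (ZMod 2))
    (α : ℝ) (hα : α ∈ Set.Ioo (0 : ℝ) 1) (z : ℝ) (hz : z ∈ Set.Ioo (0 : ℝ) 1) :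
    ∀ m : ℕ, expZ ℓ (K : Matrix (Fin ℓ) (Fin ℓ) (ZMod 2)) z m (gfun α) ≤
      (lamStar ℓ (K : Matrix (Fin ℓ) (Fin ℓ) (ZMod 2)) α) ^ m * gfun α z :=
  stmt4_general ℓ K α hα z hz

end
end

section
/- Let ℓ ≥ 1, K ∈ GL(ℓ,F₂), i ∈ {1,…,ℓ}, and S ⊆ {1,…,ℓ}. Then bit i is decodable under (K,S) if and only if the intersection of E_i ∖ E_{i−1} with the F₂-linear span of the columns of K indexed by {1,…,ℓ} ∖ S is nonempty. -/
open scoped Classical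

noncomputable section

/-- `E_j`: the span of the first `j` standard basis vectors of `F₂^ℓ`. -/
def Ej (ℓ j : ℕ) : Submodule (ZMod 2) (Fin ℓ → ZMod 2) :=
  Submodule.span (ZMod 2) {v | ∃ k : Fin ℓ, (k : ℕ) < j ∧ v = Pi.single k 1}

/-- The average conditional erasure probability `p_{i|s}` (with `i` 1-indexed): the fraction
of `(ℓ-s)`-dimensional subspaces `R` of `F₂^ℓ` with `R ∩ (E_i \ E_{i-1}) = ∅`. -/
def pis (ℓ i s : ℕ) : ℝ :=
  (Nat.card {R : Submodule (ZMod 2) (Fin ℓ → ZMod 2) //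
      Module.finrank (ZMod 2) ↥R = ℓ - s ∧
      (R : Set (Fin ℓ → ZMod 2)) ∩ ((Ej ℓ i : Set (Fin ℓ → ZMod 2)) \
        (Ej ℓ (i - 1) : Set (Fin ℓ → ZMod 2))) = ∅} : ℝ) /
  (Nat.card {R : Submodule (ZMod 2) (Fin ℓ → ZMod 2) //
      Module.finrank (ZMod 2) ↥R = ℓ - s} : ℝ)

/-- The 2-Gaussian binomial coefficient `[a choose t]₂`, as a real number. -/
def gaussBinom (a t : ℕ) : ℝ :=
  ∏ j ∈ Finset.range t, ((2 ^ a - 2 ^ j : ℝ) / (2 ^ t - 2 ^ j : ℝ))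

/-- The average erasure probability `F_i(z)` of the `i`-th bit-channel (`i` 1-indexed). -/
def Favg (ℓ i : ℕ) (z : ℝ) : ℝ :=
  ∑ s ∈ Finset.range (ℓ + 1), (Nat.choose ℓ s : ℝ) * z ^ s * (1 - z) ^ (ℓ - s) * pis ℓ i s

lemma mem_Ej_iff {ℓ : ℕ} (j : ℕ) (v : Fin ℓ → ZMod 2) :
    v ∈ Ej ℓ j ↔ ∀ k : Fin ℓ, j ≤ (k : ℕ) → v k = 0 := by
  constructor
  · intro hv
    have hle : Ej ℓ j ≤
        { carrier := {w : Fin ℓ → ZMod 2 | ∀ k : Fin ℓ, j ≤ (k : ℕ) → w k = 0}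
          zero_mem' := fun k _ => rfl
          add_mem' := fun {a b} ha hb k hk => by
            simp only [Set.mem_setOf_eq] at ha hb ⊢
            simp [Pi.add_apply, ha k hk, hb k hk]
          smul_mem' := fun c w hw k hk => by
            simp only [Set.mem_setOf_eq] at hw ⊢
            simp [hw k hk] } := by
      rw [Ej, Submodule.span_le]
      rintro w ⟨k, hk, rfl⟩ m hm
      have hne : m ≠ k := by
        intro h; subst h; omega
      simp [Pi.single_eq_of_ne hne]
    exact hle hv
  · intro h
    have hv : v = ∑ k ∈ Finset.univ.filter (fun k : Fin ℓ => (k : ℕ) < j),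
        v k • Pi.single k 1 := by
      funext r
      rw [Finset.sum_apply]
      by_cases hr : (r : ℕ) < j
      · rw [Finset.sum_eq_single r]
        · simp
        · intro b _ hb
          simp [Pi.single_eq_of_ne (Ne.symm hb)]
        · intro hmem; simp [hr] at hmem
      · rw [h r (le_of_not_gt hr)]
        refine (Finset.sum_eq_zero ?_).symm
        intro b hb
        simp only [Finset.mem_filter] at hb
        have hne : r ≠ b := by rintro rfl; exact hr hb.2
        simp [Pi.single_eq_of_ne hne]
    rw [hv]
    exact Submodule.sum_mem _ fun k hk => Submodule.smul_mem _ _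
      (Submodule.subset_span ⟨k, (Finset.mem_filter.mp hk).2, rfl⟩)

lemma dual_apply_eq_sum {ℓ : ℕ} (φ : Module.Dual (ZMod 2) (Fin ℓ → ZMod 2))
    (v : Fin ℓ → ZMod 2) : φ v = ∑ k, v k * φ (Pi.single k 1) := by
  have hv : v = ∑ k, v k • (Pi.single k 1 : Fin ℓ → ZMod 2) := by
    have := pi_eq_sum_univ v
    convert this using 2 with k
    funext m
    simp [Pi.single_apply, eq_comm]
  conv_lhs => rw [hv]
  rw [map_sum]
  refine Finset.sum_congr rfl fun k _ => ?_
  rw [map_smul, smul_eq_mul]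

theorem stmt8 (ℓ : ℕ) (hℓ : 1 ≤ ℓ) (K : Matrix.GeneralLinearGroup (Fin ℓ) (ZMod 2))
    (i : Fin ℓ) (S : Finset (Fin ℓ)) :
    Decodable ℓ (K : Matrix (Fin ℓ) (Fin ℓ) (ZMod 2)) i S ↔
      (((Ej ℓ ((i : ℕ) + 1) : Set (Fin ℓ → ZMod 2)) \
          (Ej ℓ (i : ℕ) : Set (Fin ℓ → ZMod 2))) ∩
        (Submodule.span (ZMod 2)
          ((fun j : Fin ℓ => fun r : Fin ℓ =>
              (K : Matrix (Fin ℓ) (Fin ℓ) (ZMod 2)) r j) '' ((Sᶜ : Finset (Fin ℓ)) : Set (Fin ℓ))) :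
          Set (Fin ℓ → ZMod 2))).Nonempty := by
  set M : Matrix (Fin ℓ) (Fin ℓ) (ZMod 2) := (K : Matrix (Fin ℓ) (Fin ℓ) (ZMod 2)) with hM
  set W : Submodule (ZMod 2) (Fin ℓ → ZMod 2) := Submodule.span (ZMod 2)
      ((fun j : Fin ℓ => fun r : Fin ℓ => M r j) '' ((Sᶜ : Finset (Fin ℓ)) : Set (Fin ℓ))) with hW
  constructor
  · -- Decodable ⇒ nonempty
    intro hdec
    have hann : (Ej ℓ (i : ℕ) ⊔ W).dualAnnihilator ≤ (Ej ℓ ((i : ℕ) + 1)).dualAnnihilator := by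
      intro φ hφ
      rw [Submodule.mem_dualAnnihilator] at hφ ⊢
      set d : Fin ℓ → ZMod 2 := fun k => φ (Pi.single k 1) with hd
      have hd_lt : ∀ j : Fin ℓ, j < i → d j = 0 := by
        intro j hj
        exact hφ _ (Submodule.mem_sup_left (Submodule.subset_span ⟨j, hj, rfl⟩))
      have hd_out : ∀ j : Fin ℓ, j ∉ S → Matrix.vecMul d M j = 0 := by
        intro j hj
        have hcol : (fun r : Fin ℓ => M r j) ∈ Ej ℓ (i : ℕ) ⊔ W :=
          Submodule.mem_sup_right (Submodule.subset_span ⟨j, by simpa using hj, rfl⟩)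
        have h0 : φ (fun r : Fin ℓ => M r j) = 0 := hφ _ hcol
        rw [dual_apply_eq_sum] at h0
        show dotProduct d (fun r => M r j) = 0
        rw [dotProduct]
        rw [← h0]
        exact Finset.sum_congr rfl fun k _ => mul_comm _ _
      have hdi : d i = 0 := by
        have := hdec d 0 (fun j hj => by simpa using hd_lt j hj)
          (fun j hj => by rw [Matrix.zero_vecMul]; exact (hd_out j hj).trans rfl)
        simpa using this
      intro v hv
      rw [dual_apply_eq_sum]
      refine Finset.sum_eq_zero fun k _ => ?_
      rcases lt_trichotomy k i with hk | hk | hk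
      · rw [show φ (Pi.single k 1) = d k from rfl, hd_lt k hk, mul_zero]
      · subst hk
        rw [show φ (Pi.single k 1) = d k from rfl, hdi, mul_zero]
      · have : v k = 0 := (mem_Ej_iff _ v).mp hv k (by
          have : (i : ℕ) < (k : ℕ) := hk
          omega)
        rw [this, zero_mul]
    have hle : Ej ℓ ((i : ℕ) + 1) ≤ Ej ℓ (i : ℕ) ⊔ W :=
      Subspace.dualAnnihilator_le_dualAnnihilator_iff.mp hann
    have hsingle : (Pi.single i 1 : Fin ℓ → ZMod 2) ∈ Ej ℓ ((i : ℕ) + 1) :=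
      Submodule.subset_span ⟨i, by omega, rfl⟩
    obtain ⟨b, hb, w, hw, hbw⟩ := Submodule.mem_sup.mp (hle hsingle)
    refine ⟨w, ⟨?_, ?_⟩, hw⟩
    · -- w ∈ Ej ℓ (i+1)
      have hBA : Ej ℓ (i : ℕ) ≤ Ej ℓ ((i : ℕ) + 1) := by
        apply Submodule.span_mono
        rintro v ⟨k, hk, rfl⟩
        exact ⟨k, by omega, rfl⟩
      have : w = Pi.single i 1 - b := by
        rw [← hbw]; abel
      rw [this]
      exact Submodule.sub_mem _ hsingle (hBA hb)
    · -- w ∉ Ej ℓ i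
      intro hwB
      have hsB : (Pi.single i 1 : Fin ℓ → ZMod 2) ∈ Ej ℓ (i : ℕ) := by
        rw [← hbw]; exact Submodule.add_mem _ hb hwB
      have := (mem_Ej_iff _ _).mp hsB i le_rfl
      simp at this
  · -- nonempty ⇒ Decodable
    rintro ⟨v, ⟨hvA, hvB⟩, hvW⟩
    intro u u' hlt hout
    set d : Fin ℓ → ZMod 2 := u - u' with hd
    have hdlt : ∀ j : Fin ℓ, j < i → d j = 0 := fun j hj => by
      simp [hd, sub_eq_zero, hlt j hj]
    have hdout : ∀ j : Fin ℓ, j ∉ S → Matrix.vecMul d M j = 0 := fun j hj => by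
      rw [hd, Matrix.sub_vecMul, Pi.sub_apply, hout j hj, sub_self]
    -- v_k = 0 for k > i
    have hvhigh : ∀ k : Fin ℓ, (i : ℕ) < (k : ℕ) → v k = 0 := fun k hk =>
      (mem_Ej_iff _ v).mp hvA k (by omega)
    have hvi : v i ≠ 0 := by
      intro h0
      apply hvB
      refine (mem_Ej_iff _ _).mpr fun k hk => ?_
      rcases eq_or_lt_of_le hk with hk' | hk'
      · have : k = i := Fin.ext hk'.symm
        rw [this]; exact h0
      · exact hvhigh k hk'
    -- d ⬝ᵥ v = 0 since v ∈ span of columns annihilated by d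
    have hker : W ≤
        { carrier := {x : Fin ℓ → ZMod 2 | dotProduct d x = 0}
          zero_mem' := by simp [dotProduct]
          add_mem' := fun {a b} ha hb => by
            simp only [Set.mem_setOf_eq] at ha hb ⊢
            rw [dotProduct_add, ha, hb, add_zero]
          smul_mem' := fun c x hx => by
            simp only [Set.mem_setOf_eq] at hx ⊢
            rw [dotProduct_smul, hx, smul_zero] } := by
      rw [hW, Submodule.span_le]
      rintro x ⟨j, hj, rfl⟩
      exact hdout j (by simpa using hj)
    have hdv : dotProduct d v = 0 := hker hvW
    have hsum : dotProduct d v = d i * v i := by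
      rw [dotProduct]
      rw [Finset.sum_eq_single i]
      · intro k _ hk
        rcases lt_or_gt_of_ne (fun h : (k : ℕ) = (i : ℕ) => hk (Fin.ext h)) with h | h
        · rw [hdlt k (by exact h), zero_mul]
        · rw [hvhigh k h, mul_zero]
      · intro h; exact absurd (Finset.mem_univ i) h
    rw [hsum] at hdv
    rcases mul_eq_zero.mp hdv with h | h
    · exact sub_eq_zero.mp (show u i - u' i = 0 from h)
    · exact absurd h hvi
  done

end
end

section
/- Let ℓ ≥ 1, 1 ≤ i ≤ ℓ, and 0 ≤ s ≤ ℓ. Then p_{i|s} ≥ 1 − 2^{−(s−i)}. -/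
/-!
Fix `k = ℓ - s`. The linear automorphisms of a finite vector space act transitively on its nonzero
vectors, so the number `M` of `k`-dimensional subspaces through a nonzero vector does not depend
on the vector; counting the incidences between nonzero vectors and `k`-dimensional subspaces then
gives `T (2^k - 1) = (2^ℓ - 1) M`, where `T` counts all `k`-dimensional subspaces, hence
`M / T ≤ 2^k / 2^ℓ = 2^{-s}`. A subspace meeting `E_i ∖ E_{i-1}` contains one of its at most `2^i`
(nonzero) vectors, so by the union bound the proportion of such subspaces is at most `2^{i-s}`.
-/

open scoped Classical

open Module Finset

theorem Nat.card_and_add_card_and_not {α : Type*} [Finite α] (p q : α → Prop) :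
    Nat.card {a // p a ∧ q a} + Nat.card {a // p a ∧ ¬ q a} = Nat.card {a // p a} := by
  have := Fintype.ofFinite α
  simp only [Nat.card_eq_fintype_card, Fintype.card_subtype, ← filter_filter]
  exact card_filter_add_card_filter_not _

theorem Nat.card_and_exists_mem_le {α β : Type*} [Finite α] (p : α → Prop) (r : β → α → Prop)
    (S : Finset β) :
    Nat.card {a // p a ∧ ∃ x ∈ S, r x a} ≤ ∑ x ∈ S, Nat.card {a // p a ∧ r x a} := by
  have := Fintype.ofFinite α
  simp only [Nat.card_eq_fintype_card, Fintype.card_subtype]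
  refine (card_le_card fun a ha => ?_).trans card_biUnion_le
  simp only [mem_filter, mem_univ, true_and, mem_biUnion] at ha ⊢
  obtain ⟨hp, x, hx, hr⟩ := ha
  exact ⟨x, hx, hp, hr⟩

section Subspaces

variable {K V : Type*} [Field K] [AddCommGroup V] [Module K V]

theorem exists_linearEquiv_apply_eq {v w : V} (hv : v ≠ 0) (hw : w ≠ 0) :
    ∃ e : V ≃ₗ[K] V, e v = w := by
  obtain ⟨e, he⟩ := Submodule.exists_linearEquiv_restrict_eq
    ((LinearEquiv.toSpanNonzeroSingleton K V v hv).symm ≪≫ₗ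
      LinearEquiv.toSpanNonzeroSingleton K V w hw)
  refine ⟨e, ?_⟩
  have := he (LinearEquiv.toSpanNonzeroSingleton K V v hv 1)
  rw [LinearEquiv.trans_apply, LinearEquiv.symm_apply_apply,
    LinearEquiv.toSpanNonzeroSingleton_one, LinearEquiv.toSpanNonzeroSingleton_one] at this
  exact this.symm

theorem card_finrank_eq_and_mem_eq (k : ℕ) {v w : V} (hv : v ≠ 0) (hw : w ≠ 0) :
    Nat.card {R : Submodule K V // finrank K R = k ∧ v ∈ R} =
      Nat.card {R : Submodule K V // finrank K R = k ∧ w ∈ R} := by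
  obtain ⟨e, rfl⟩ := exists_linearEquiv_apply_eq (K := K) hv hw
  refine Nat.card_congr (Equiv.subtypeEquiv (Submodule.orderIsoMapComap e).toEquiv fun R => ?_)
  change _ ↔ finrank K (R.map (e : V →ₗ[K] V)) = k ∧ e v ∈ R.map (e : V →ₗ[K] V)
  rw [LinearEquiv.finrank_map_eq, Submodule.mem_map_equiv, e.symm_apply_apply]

variable [Finite V]

theorem card_finrank_eq_pos {k : ℕ} (hk : k ≤ finrank K V) :
    0 < Nat.card {R : Submodule K V // finrank K R = k} := by
  have hli := (finBasis K V).linearIndependent.comp _ (Fin.castLE_injective hk)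
  have : Nonempty {R : Submodule K V // finrank K R = k} :=
    ⟨⟨_, (finrank_span_eq_card hli).trans (Fintype.card_fin k)⟩⟩
  exact Nat.card_pos

theorem card_finrank_eq_mul_pow_sub_one (k : ℕ) {v : V} (hv : v ≠ 0) :
    Nat.card {R : Submodule K V // finrank K R = k} * (Nat.card K ^ k - 1) =
      (Nat.card K ^ finrank K V - 1) *
        Nat.card {R : Submodule K V // finrank K R = k ∧ v ∈ R} := by
  have := Fintype.ofFinite V
  have := Fintype.ofFinite (Submodule K V)
  simp only [Nat.card_eq_fintype_card, Fintype.card_subtype]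
  have hV : #{x : V | x ≠ 0} = Nat.card K ^ finrank K V - 1 := by
    rw [filter_ne', card_erase_of_mem (mem_univ _), card_univ, ← Nat.card_eq_fintype_card,
      natCard_eq_pow_finrank (K := K)]
  rw [← hV]
  refine card_mul_eq_card_mul (fun R x => x ∈ R) (fun R hR => ?_) (fun x hx => ?_)
  · rw [mem_filter] at hR
    have hR' : #{x : V | x ∈ R} = Nat.card K ^ k := by
      rw [← Fintype.card_subtype, ← Nat.card_eq_fintype_card, ← hR.2]
      exact natCard_eq_pow_finrank
    rw [← hR', bipartiteAbove, filter_filter,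
      ← card_erase_of_mem (s := {x : V | x ∈ R}) (a := 0) (by simp)]
    congr 1
    ext x
    simp [and_comm]
  · rw [mem_filter] at hx
    rw [bipartiteBelow, filter_filter]
    have := card_finrank_eq_and_mem_eq (K := K) k hx.2 hv
    simpa only [Nat.card_eq_fintype_card, Fintype.card_subtype] using this

theorem card_finrank_eq_and_mem_mul_le [Finite K] {k : ℕ} (hk : k ≤ finrank K V) {v : V}
    (hv : v ≠ 0) :
    Nat.card {R : Submodule K V // finrank K R = k ∧ v ∈ R} * Nat.card K ^ (finrank K V - k) ≤
      Nat.card {R : Submodule K V // finrank K R = k} := by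
  set M := Nat.card {R : Submodule K V // finrank K R = k ∧ v ∈ R}
  set T := Nat.card {R : Submodule K V // finrank K R = k}
  have hMT : M ≤ T :=
    Nat.card_le_card_of_injective (fun R => ⟨R.1, R.2.1⟩) fun _ _ h =>
      Subtype.ext (congrArg Subtype.val h :)
  have hcount := card_finrank_eq_mul_pow_sub_one (K := K) k hv
  have hqk : 1 ≤ Nat.card K ^ k := Nat.one_le_pow _ _ Nat.card_pos
  have hqn : 1 ≤ Nat.card K ^ finrank K V := Nat.one_le_pow _ _ Nat.card_pos
  refine Nat.le_of_mul_le_mul_right ?_ hqk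
  calc M * Nat.card K ^ (finrank K V - k) * Nat.card K ^ k
      = (Nat.card K ^ finrank K V - 1) * M + M := by
        rw [mul_assoc, ← pow_add, Nat.sub_add_cancel hk, Nat.sub_mul, one_mul,
          Nat.sub_add_cancel (Nat.le_mul_of_pos_left _ hqn), mul_comm]
    _ = T * (Nat.card K ^ k - 1) + M := by rw [hcount]
    _ ≤ T * (Nat.card K ^ k - 1) + T := Nat.add_le_add_left hMT _
    _ = T * Nat.card K ^ k := by
        rw [Nat.mul_sub, mul_one, Nat.sub_add_cancel (Nat.le_mul_of_pos_right _ hqk)]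

theorem card_finrank_eq_and_inter_nonempty_mul_le [Finite K] {k : ℕ} (hk : k ≤ finrank K V)
    {S : Set V} (hS : 0 ∉ S) :
    Nat.card {R : Submodule K V // finrank K R = k ∧ ((R : Set V) ∩ S).Nonempty} *
        Nat.card K ^ (finrank K V - k) ≤
      S.ncard * Nat.card {R : Submodule K V // finrank K R = k} := by
  obtain ⟨S, rfl⟩ := S.toFinite.exists_finset_coe
  simp only [Set.inter_nonempty_iff_exists_right, SetLike.mem_coe, Set.ncard_coe_finset]
  calc _ ≤ (∑ x ∈ S, Nat.card {R : Submodule K V // finrank K R = k ∧ x ∈ R}) *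
        Nat.card K ^ (finrank K V - k) :=
        Nat.mul_le_mul_right _ (Nat.card_and_exists_mem_le _ (fun x R => x ∈ R) S)
    _ ≤ ∑ _x ∈ S, Nat.card {R : Submodule K V // finrank K R = k} := by
        rw [sum_mul]
        exact sum_le_sum fun x hx =>
          card_finrank_eq_and_mem_mul_le hk (ne_of_mem_of_not_mem (mem_coe.mpr hx) hS)
    _ = #S * Nat.card {R : Submodule K V // finrank K R = k} := by
        rw [sum_const, smul_eq_mul]

end Subspaces

theorem finrank_Ej_le (ℓ i : ℕ) : finrank (ZMod 2) (Ej ℓ i) ≤ i := by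
  have hgen : Ej ℓ i ≤ Submodule.span (ZMod 2)
      (({k : Fin ℓ | (k : ℕ) < i} : Finset (Fin ℓ)).image (Pi.single · (1 : ZMod 2)) : Set _) := by
    refine Submodule.span_mono ?_
    rintro _ ⟨k, hk, rfl⟩
    simpa using ⟨k, hk, rfl⟩
  calc _ ≤ _ := Submodule.finrank_mono hgen
    _ ≤ _ := finrank_span_finset_le_card _
    _ ≤ #({k : Fin ℓ | (k : ℕ) < i} : Finset (Fin ℓ)) := card_image_le
    _ ≤ i := Fin.card_filter_val_lt.trans_le (min_le_right _ _)

theorem stmt12_general (ℓ i s : ℕ) (hs : s ≤ ℓ) :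
    pis ℓ i s ≥ 1 - (2 : ℝ) ^ (-((s : ℤ) - (i : ℤ))) := by
  set S : Set (Fin ℓ → ZMod 2) := (Ej ℓ i : Set (Fin ℓ → ZMod 2)) \ Ej ℓ (i - 1)
  set P : Submodule (ZMod 2) (Fin ℓ → ZMod 2) → Prop := fun R => finrank (ZMod 2) R = ℓ - s
  set T := Nat.card {R // P R}
  set G := Nat.card {R // P R ∧ (R : Set (Fin ℓ → ZMod 2)) ∩ S = ∅}
  set B := Nat.card {R // P R ∧ ((R : Set (Fin ℓ → ZMod 2)) ∩ S).Nonempty}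
  have hsplit : G + B = T := by
    have := Nat.card_and_add_card_and_not P fun R => ((R : Set (Fin ℓ → ZMod 2)) ∩ S).Nonempty
    simpa only [Set.not_nonempty_iff_eq_empty, add_comm] using this
  have hT : 0 < T := card_finrank_eq_pos (by simp)
  have hS : S.ncard ≤ 2 ^ i := by
    calc S.ncard ≤ Nat.card (Ej ℓ i) := Set.ncard_le_ncard Set.sdiff_subset
      _ ≤ 2 ^ i := by
        rw [natCard_eq_pow_finrank (K := ZMod 2), Nat.card_zmod]
        exact Nat.pow_le_pow_right two_pos (finrank_Ej_le ℓ i)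
  have hB : B * 2 ^ s ≤ 2 ^ i * T := by
    have hunion := card_finrank_eq_and_inter_nonempty_mul_le (K := ZMod 2)
      (V := Fin ℓ → ZMod 2) (k := ℓ - s) (by simp) (S := S) fun h => h.2 (Ej ℓ (i - 1)).zero_mem
    rw [finrank_fin_fun, Nat.card_zmod, Nat.sub_sub_self hs] at hunion
    exact hunion.trans (Nat.mul_le_mul_right _ hS)
  change _ ≤ (G : ℝ) / T
  have hG : (T : ℝ) - G = B := by rw [← hsplit]; push_cast; ring
  rw [neg_sub, zpow_sub₀ two_ne_zero, zpow_natCast, zpow_natCast,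
    le_div_iff₀ (by exact_mod_cast hT), sub_mul, one_mul, div_mul_eq_mul_div,
    sub_le_iff_le_add, ← sub_le_iff_le_add', le_div_iff₀ (by positivity), hG]
  exact_mod_cast hB

theorem stmt12 (ℓ i s : ℕ) (hℓ : 1 ≤ ℓ) (hi : 1 ≤ i) (hiℓ : i ≤ ℓ) (hs : s ≤ ℓ) :
    pis ℓ i s ≥ 1 - (2 : ℝ) ^ (-((s : ℤ) - (i : ℤ))) :=
  stmt12_general ℓ i s hs
end

section
/- Let ℓ ≥ 1, 1 ≤ i ≤ ℓ, and 0 ≤ s ≤ ℓ. Then p_{i|s} ≤ 2·(2/3)^{i−s−1}. -/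
open scoped Classical

noncomputable section

/-!
If `R` meets no vector of `E_i \ E_{i-1}`, then `e_i ∉ R + E_{i-1}`, so some functional `φ`
vanishes on `R + E_{i-1}` with `φ e_i = 1`; there are at most `2^(ℓ-i)` such `φ`. For a fixed
`φ ≠ 0` and `v₀` with `φ v₀ = 1`, every `r`-dimensional `R ≤ ker φ` carries `2^r` distinct
`r`-dimensional graphs `{x + w x • v₀ | x ∈ R}`, one for each functional `w` on `R`, and different
pairs `(R, w)` give different graphs. Hence `p_{i|s} ≤ 2^(ℓ-i) / 2^(ℓ-s) = 2^(s-i)`, which is at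
most `2 (2/3)^(i-s-1)` once `s < i`; for `i ≤ s` the right-hand side is at least `1`.
-/

open Module Submodule

instance Submodule.finite_of_finite {R M : Type*} [Semiring R] [AddCommMonoid M] [Module R M]
    [Finite M] : Finite (Submodule R M) :=
  Finite.of_injective _ SetLike.coe_injective

section Graph

variable {K V : Type*} [Field K] [AddCommGroup V] [Module K V]

def graphMap (R : Submodule K V) (v₀ : V) (w : Dual K R) : R →ₗ[K] V :=
  R.subtype + w.smulRight v₀

def projAlong (φ : Dual K V) (v₀ : V) : V →ₗ[K] V :=
  LinearMap.id - φ.smulRight v₀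

variable {φ : Dual K V} {v₀ : V} {R : Submodule K V}

lemma projAlong_comp_graphMap (hv₀ : φ v₀ = 1) (hR : R ≤ LinearMap.ker φ) (w : Dual K R) :
    projAlong φ v₀ ∘ₗ graphMap R v₀ w = R.subtype := by
  ext x
  simp [projAlong, graphMap, LinearMap.mem_ker.mp (hR x.2), hv₀]

lemma apply_graphMap (hv₀ : φ v₀ = 1) (hR : R ≤ LinearMap.ker φ) (w : Dual K R) (x : R) :
    φ (graphMap R v₀ w x) = w x := by
  simp [graphMap, LinearMap.mem_ker.mp (hR x.2), hv₀]

lemma graphMap_injective (hv₀ : φ v₀ = 1) (hR : R ≤ LinearMap.ker φ) (w : Dual K R) :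
    Function.Injective (graphMap R v₀ w) := by
  refine Function.Injective.of_comp (f := projAlong φ v₀) ?_
  rw [← LinearMap.coe_comp, projAlong_comp_graphMap hv₀ hR]
  exact R.injective_subtype

lemma map_projAlong_range_graphMap (hv₀ : φ v₀ = 1) (hR : R ≤ LinearMap.ker φ) (w : Dual K R) :
    (LinearMap.range (graphMap R v₀ w)).map (projAlong φ v₀) = R := by
  rw [← LinearMap.range_comp, projAlong_comp_graphMap hv₀ hR, range_subtype]

lemma exists_apply_eq_one_of_ne_zero (hφ : φ ≠ 0) : ∃ v₀, φ v₀ = 1 := by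
  obtain ⟨v, hv⟩ := DFunLike.ne_iff.mp hφ
  exact ⟨(φ v)⁻¹ • v, by simp [inv_mul_cancel₀ hv]⟩

lemma exists_dual_le_ker_apply_eq_one {W : Submodule K V} {v : V} (hv : v ∉ W) :
    ∃ φ : Dual K V, W ≤ LinearMap.ker φ ∧ φ v = 1 := by
  obtain ⟨f, hfv, hfW⟩ := exists_dual_map_eq_bot_of_notMem hv inferInstance
  refine ⟨(f v)⁻¹ • f, fun x hx => ?_, by simp [inv_mul_cancel₀ hfv]⟩
  have : f x = 0 := (mem_bot K).mp (hfW ▸ mem_map_of_mem hx)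
  simp [this]

lemma natCard_finrank_eq_le_ker_mul_pow_le [Finite K] [Finite V] (hφ : φ ≠ 0) (r : ℕ) :
    Nat.card {R : Submodule K V // finrank K R = r ∧ R ≤ LinearMap.ker φ} * Nat.card K ^ r ≤
      Nat.card {R : Submodule K V // finrank K R = r} := by
  obtain ⟨v₀, hv₀⟩ := exists_apply_eq_one_of_ne_zero hφ
  let S := {R : Submodule K V // finrank K R = r ∧ R ≤ LinearMap.ker φ}
  let G : (Σ R : S, Dual K R.1) → {R : Submodule K V // finrank K R = r} := fun p =>
    ⟨LinearMap.range (graphMap p.1.1 v₀ p.2), by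
      rw [LinearMap.finrank_range_of_inj (graphMap_injective hv₀ p.1.2.2 p.2), p.1.2.1]⟩
  -- `projAlong φ v₀` recovers `R` from the graph of `w`, and then `φ` recovers `w`.
  have hG : Function.Injective G := by
    rintro ⟨⟨R, hR⟩, w⟩ ⟨⟨R', hR'⟩, w'⟩ h
    have hrange : LinearMap.range (graphMap R v₀ w) = LinearMap.range (graphMap R' v₀ w') :=
      congrArg Subtype.val h
    obtain rfl : R = R' := by
      rw [← map_projAlong_range_graphMap hv₀ hR.2 w, ← map_projAlong_range_graphMap hv₀ hR'.2 w']
      exact congrArg (map (projAlong φ v₀)) hrange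
    refine Sigma.ext rfl (heq_of_eq (LinearMap.ext fun x => ?_))
    obtain ⟨y, hy⟩ : graphMap R v₀ w x ∈ LinearMap.range (graphMap R v₀ w') :=
      hrange ▸ LinearMap.mem_range_self _ x
    have hyx : y = x := Subtype.ext (by
      simpa only [← LinearMap.comp_apply, projAlong_comp_graphMap hv₀ hR.2, coe_subtype]
        using congrArg (projAlong φ v₀) hy)
    rw [← apply_graphMap hv₀ hR.2 w, ← hy, hyx, apply_graphMap hv₀ hR.2 w']
  have : Fintype S := Fintype.ofFinite S
  have (R : S) : Finite (Dual K R.1) := Module.finite_of_finite K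
  calc Nat.card S * Nat.card K ^ r = Nat.card (Σ R : S, Dual K R.1) := by
        rw [Nat.card_sigma, Finset.sum_congr rfl fun R _ => by
          rw [Module.natCard_eq_pow_finrank (K := K), Subspace.dual_finrank_eq, R.2.1]]
        simp
    _ ≤ _ := Nat.card_le_card_of_injective G hG

end Graph

lemma natCard_subtype_mul_le_of_cover {α ι : Type*} [Finite α] [Finite ι] {p : α → Prop}
    (s : ι → Set α) (hs : ∀ x, p x → ∃ c, x ∈ s c) {m N : ℕ}
    (hN : ∀ c, Nat.card (s c) * m ≤ N) : Nat.card {x // p x} * m ≤ Nat.card ι * N := by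
  have := Fintype.ofFinite ι
  have hcover : Nat.card {x // p x} ≤ ∑ c, Nat.card (s c) := by
    calc Nat.card {x // p x} = {x | p x}.ncard := Nat.card_coe_set_eq _
      _ ≤ (⋃ c, s c).ncard :=
        Set.ncard_le_ncard (fun x hx => Set.mem_iUnion.mpr (hs x hx)) (Set.toFinite _)
      _ ≤ ∑ c, (s c).ncard := Set.ncard_iUnion_le_of_fintype s
      _ = ∑ c, Nat.card (s c) := by simp only [Nat.card_coe_set_eq]
  calc Nat.card {x // p x} * m ≤ ∑ c, Nat.card (s c) * m := by
        rw [← Finset.sum_mul]; gcongr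
    _ ≤ ∑ _c : ι, N := Finset.sum_le_sum fun c _ => hN c
    _ = Nat.card ι * N := by simp

section Layers

variable {ℓ : ℕ}

lemma single_mem_Ej {m : ℕ} {j : Fin ℓ} (hj : (j : ℕ) < m) :
    Pi.single j (1 : ZMod 2) ∈ Ej ℓ m :=
  subset_span ⟨j, hj, rfl⟩

lemma Ej_mono {m m' : ℕ} (h : m ≤ m') : Ej ℓ m ≤ Ej ℓ m' :=
  span_mono fun _ ⟨k, hk, hv⟩ => ⟨k, hk.trans_le h, hv⟩

lemma single_notMem_Ej (k : Fin ℓ) : Pi.single k (1 : ZMod 2) ∉ Ej ℓ k := by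
  have hle : Ej ℓ k ≤ LinearMap.ker (LinearMap.proj k) := by
    refine span_le.mpr ?_
    rintro _ ⟨j, hj, rfl⟩
    simp [Fin.ne_of_lt hj]
  intro h
  simpa using hle h

lemma single_notMem_sup_Ej {k : Fin ℓ} {R : Submodule (ZMod 2) (Fin ℓ → ZMod 2)}
    (hR : (R : Set (Fin ℓ → ZMod 2)) ∩
      ((Ej ℓ (k + 1) : Set (Fin ℓ → ZMod 2)) \ (Ej ℓ k : Set (Fin ℓ → ZMod 2))) = ∅) :
    Pi.single k (1 : ZMod 2) ∉ R ⊔ Ej ℓ k := by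
  intro hmem
  obtain ⟨x, hx, u, hu, hxu⟩ := mem_sup.mp hmem
  have hxk : x ∉ Ej ℓ k := fun hxk => single_notMem_Ej k (hxu ▸ add_mem hxk hu)
  have hxk1 : x ∈ Ej ℓ (k + 1) := by
    rw [eq_sub_of_add_eq hxu]
    exact sub_mem (single_mem_Ej (Nat.lt_succ_self k)) (Ej_mono (Nat.le_succ k) hu)
  exact (Set.eq_empty_iff_forall_notMem.mp hR) x ⟨hx, hxk1, hxk⟩

def layerDuals (k : Fin ℓ) : Set (Dual (ZMod 2) (Fin ℓ → ZMod 2)) :=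
  {φ | Ej ℓ k ≤ LinearMap.ker φ ∧ φ (Pi.single k 1) = 1}

lemma natCard_layerDuals_le (k : Fin ℓ) : Nat.card (layerDuals k) ≤ 2 ^ (ℓ - (k + 1)) := by
  let f : layerDuals k → (Set.Ioi k → ZMod 2) := fun φ j => φ.1 (Pi.single j 1)
  have hf : Function.Injective f := by
    rintro ⟨φ, hφ⟩ ⟨ψ, hψ⟩ h
    refine Subtype.ext ((Pi.basisFun _ _).ext fun j => ?_)
    rw [Pi.basisFun_apply]
    rcases lt_trichotomy j k with hj | rfl | hj
    · rw [LinearMap.mem_ker.mp (hφ.1 (single_mem_Ej hj)),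
        LinearMap.mem_ker.mp (hψ.1 (single_mem_Ej hj))]
    · rw [hφ.2, hψ.2]
    · exact congrFun h ⟨j, hj⟩
  calc Nat.card (layerDuals k) ≤ Nat.card (Set.Ioi k → ZMod 2) :=
        Nat.card_le_card_of_injective f hf
    _ = 2 ^ (ℓ - (k + 1)) := by simp; omega

lemma natCard_avoiding_layer_mul_pow_le (k : Fin ℓ) (r : ℕ) :
    Nat.card {R : Submodule (ZMod 2) (Fin ℓ → ZMod 2) // finrank (ZMod 2) R = r ∧
      (R : Set (Fin ℓ → ZMod 2)) ∩
        ((Ej ℓ (k + 1) : Set (Fin ℓ → ZMod 2)) \ (Ej ℓ k : Set (Fin ℓ → ZMod 2))) = ∅} * 2 ^ r ≤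
      2 ^ (ℓ - (k + 1)) * Nat.card {R : Submodule (ZMod 2) (Fin ℓ → ZMod 2) //
        finrank (ZMod 2) R = r} := by
  have : Finite (Dual (ZMod 2) (Fin ℓ → ZMod 2)) := Module.finite_of_finite (ZMod 2)
  let s : layerDuals k → Set (Submodule (ZMod 2) (Fin ℓ → ZMod 2)) := fun φ =>
    {R | finrank (ZMod 2) R = r ∧ R ≤ LinearMap.ker φ.1}
  have hN : ∀ φ, Nat.card (s φ) * 2 ^ r ≤ Nat.card {R : Submodule (ZMod 2) (Fin ℓ → ZMod 2) //
      finrank (ZMod 2) R = r} := fun φ => by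
    have hφ : φ.1 ≠ 0 := fun h => by simpa [h] using φ.2.2
    have := natCard_finrank_eq_le_ker_mul_pow_le hφ r
    rwa [Nat.card_zmod] at this
  refine (natCard_subtype_mul_le_of_cover s ?_ hN).trans
    (Nat.mul_le_mul_right _ (natCard_layerDuals_le k))
  rintro R ⟨hr, hR⟩
  obtain ⟨φ, hφ, hφk⟩ := exists_dual_le_ker_apply_eq_one (single_notMem_sup_Ej hR)
  exact ⟨⟨φ, le_sup_right.trans hφ, hφk⟩, hr, le_sup_left.trans hφ⟩

end Layers

lemma pis_le_one (ℓ i s : ℕ) : pis ℓ i s ≤ 1 := by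
  refine div_le_one_of_le₀ (Nat.cast_le.mpr ?_) (Nat.cast_nonneg _)
  exact Nat.card_le_card_of_injective (fun R => ⟨R.1, R.2.1⟩)
    fun _ _ h => Subtype.ext (congrArg Subtype.val h :)

lemma pis_le_two_pow_div {ℓ : ℕ} (k : Fin ℓ) (s : ℕ) :
    pis ℓ (k + 1) s ≤ 2 ^ (ℓ - (k + 1)) / 2 ^ (ℓ - s) := by
  rw [le_div_iff₀ (by positivity), pis, Nat.add_sub_cancel]
  refine (div_mul_eq_mul_div _ _ _).trans_le (div_le_of_le_mul₀ (Nat.cast_nonneg _)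
    (by positivity) ?_)
  exact_mod_cast natCard_avoiding_layer_mul_pow_le k (ℓ - s)

lemma one_le_two_mul_two_thirds_zpow {n : ℤ} (hn : n ≤ 0) : 1 ≤ 2 * (2 / 3 : ℝ) ^ n := by
  have := one_le_zpow_of_nonpos₀ (a := (2 / 3 : ℝ)) (by norm_num) (by norm_num) hn
  linarith

lemma half_pow_succ_le_two_mul_two_thirds_pow (d : ℕ) :
    (1 / 2 : ℝ) ^ (d + 1) ≤ 2 * (2 / 3 : ℝ) ^ d := by
  calc (1 / 2 : ℝ) ^ (d + 1) ≤ (2 / 3) ^ (d + 1) := pow_le_pow_left₀ (by norm_num) (by norm_num) _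
    _ ≤ (2 / 3) ^ d := pow_le_pow_of_le_one (by norm_num) (by norm_num) d.le_succ
    _ ≤ 2 * (2 / 3) ^ d := le_mul_of_one_le_left (by positivity) one_le_two

theorem stmt14_general (ℓ i s : ℕ) (hi : 1 ≤ i) (hiℓ : i ≤ ℓ) :
    pis ℓ i s ≤ 2 * (2 / 3 : ℝ) ^ ((i : ℤ) - (s : ℤ) - 1) := by
  obtain ⟨k, rfl⟩ : ∃ k : Fin ℓ, i = k + 1 := ⟨⟨i - 1, by omega⟩, by simp; omega⟩
  rcases lt_or_ge (k : ℕ) s with hks | hsk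
  · exact (pis_le_one ℓ _ s).trans (one_le_two_mul_two_thirds_zpow (by omega))
  · obtain ⟨d, hd⟩ := Nat.exists_eq_add_of_le hsk
    have hℓs : ℓ - s = (ℓ - (k + 1)) + (d + 1) := by omega
    rw [show ((k + 1 : ℕ) : ℤ) - s - 1 = d by omega, zpow_natCast]
    calc pis ℓ (k + 1) s ≤ 2 ^ (ℓ - (k + 1)) / 2 ^ (ℓ - s) := pis_le_two_pow_div k s
      _ = (1 / 2) ^ (d + 1) := by rw [hℓs, pow_add, one_div_pow]; field_simp
      _ ≤ 2 * (2 / 3) ^ d := half_pow_succ_le_two_mul_two_thirds_pow d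

theorem stmt14 (ℓ i s : ℕ) (hℓ : 1 ≤ ℓ) (hi : 1 ≤ i) (hiℓ : i ≤ ℓ) (hs : s ≤ ℓ) :
    pis ℓ i s ≤ 2 * (2 / 3 : ℝ) ^ ((i : ℤ) - (s : ℤ) - 1) :=
  stmt14_general ℓ i s hi hiℓ

end
end

section
/- Let ℓ ≥ 18 and let K ∈ GL(ℓ,F₂) be such that q_{i|s}(K) ≤ 6·ℓ²·(ℓ+1)·(2/3)^{i−s} for all i ∈ {1,…,ℓ} and all s ∈ {1,…,ℓ}. Then for every i ∈ {1,…,ℓ} and every z ∈ (0, 1/ℓ²), f_{K,i}(z) < 38·ℓ⁴·(2/3)^{i}·z. -/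
open scoped Classical

noncomputable section

/-- The conditional erasure probability `q_{i|s}(K)`: the fraction of `s`-element erasure
sets `S ⊆ {1,…,ℓ}` for which bit `i` is not decodable under `(K, S)`. -/
def qis (ℓ : ℕ) (K : Matrix (Fin ℓ) (Fin ℓ) (ZMod 2)) (i : Fin ℓ) (s : ℕ) : ℝ :=
  ((Finset.univ.filter (fun S : Finset (Fin ℓ) => S.card = s ∧ ¬ Decodable ℓ K i S)).card : ℝ) /
    (Nat.choose ℓ s : ℝ)

-- decodable with empty erasure set
lemma dec_empty (ℓ : ℕ) (K : Matrix.GeneralLinearGroup (Fin ℓ) (ZMod 2)) (i : Fin ℓ) :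
    Decodable ℓ (K : Matrix (Fin ℓ) (Fin ℓ) (ZMod 2)) i ∅ := by
  intro u u' _ h2
  have h : Matrix.vecMul u (K : Matrix (Fin ℓ) (Fin ℓ) (ZMod 2)) =
      Matrix.vecMul u' (K : Matrix (Fin ℓ) (Fin ℓ) (ZMod 2)) :=
    funext fun j => h2 j (by simp)
  have h3 := congrArg (fun v => Matrix.vecMul v ((K⁻¹ : Matrix.GeneralLinearGroup (Fin ℓ) (ZMod 2)) :
      Matrix (Fin ℓ) (Fin ℓ) (ZMod 2))) h
  simp only [Matrix.vecMul_vecMul] at h3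
  rw [show ((K : Matrix (Fin ℓ) (Fin ℓ) (ZMod 2)) * ((K⁻¹ : Matrix.GeneralLinearGroup (Fin ℓ) (ZMod 2)) : Matrix (Fin ℓ) (Fin ℓ) (ZMod 2))) = 1 from K.mul_inv,
    Matrix.vecMul_one, Matrix.vecMul_one] at h3
  exact congrFun h3 i

theorem stmt17 (ℓ : ℕ) (hℓ : 18 ≤ ℓ) (K : Matrix.GeneralLinearGroup (Fin ℓ) (ZMod 2))
    (hq : ∀ i : Fin ℓ, ∀ s : ℕ, 1 ≤ s → s ≤ ℓ →
      qis ℓ (K : Matrix (Fin ℓ) (Fin ℓ) (ZMod 2)) i s ≤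
        6 * (ℓ : ℝ) ^ 2 * ((ℓ : ℝ) + 1) * (2 / 3 : ℝ) ^ (((i : ℕ) + 1 : ℤ) - (s : ℤ))) :
    ∀ i : Fin ℓ, ∀ z ∈ Set.Ioo (0 : ℝ) (1 / (ℓ : ℝ) ^ 2),
      fK ℓ (K : Matrix (Fin ℓ) (Fin ℓ) (ZMod 2)) i z <
        38 * (ℓ : ℝ) ^ 4 * (2 / 3 : ℝ) ^ ((i : ℕ) + 1) * z := by
  intro i z hz
  obtain ⟨hz0, hz1⟩ := hz
  set Kv : Matrix (Fin ℓ) (Fin ℓ) (ZMod 2) := (K : Matrix (Fin ℓ) (Fin ℓ) (ZMod 2)) with hKv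
  have hℓ0 : (0:ℝ) < ℓ := by positivity
  have hℓR : (18:ℝ) ≤ ℓ := by exact_mod_cast hℓ
  have hz_le1 : z ≤ 1 := by
    have : (1:ℝ)/(ℓ:ℝ)^2 ≤ 1 := by
      rw [div_le_one (by positivity)]; nlinarith
    linarith
  -- bad-set counts
  set N : ℕ → ℕ := fun s =>
    (Finset.univ.filter (fun S : Finset (Fin ℓ) => S.card = s ∧ ¬ Decodable ℓ Kv i S)).card with hN
  -- Step 1: fK ≤ ∑_{s ≤ ℓ} N s * z^s
  have step1 : fK ℓ Kv i z ≤ ∑ s ∈ Finset.range (ℓ+1), (N s : ℝ) * z ^ s := by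
    have h1 : fK ℓ Kv i z ≤ ∑ S : Finset (Fin ℓ),
        (if ¬ Decodable ℓ Kv i S then z ^ S.card else 0) := by
      apply Finset.sum_le_sum
      intro S _
      by_cases hS : ¬ Decodable ℓ Kv i S
      · simp only [hS, if_true]
        have : (1 - z) ^ (ℓ - S.card) ≤ 1 :=
          pow_le_one₀ (by linarith) (by linarith)
        calc z ^ S.card * (1 - z) ^ (ℓ - S.card) ≤ z ^ S.card * 1 := by
              apply mul_le_mul_of_nonneg_left this (by positivity)
          _ = z ^ S.card := by ring
      · simp [hS]
    refine h1.trans (le_of_eq ?_)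
    rw [← Finset.sum_fiberwise_of_maps_to (g := fun S : Finset (Fin ℓ) => S.card)
      (t := Finset.range (ℓ+1)) (fun S _ => Finset.mem_range.mpr
        (Nat.lt_succ_of_le (by simpa using S.card_le_univ)))]
    apply Finset.sum_congr rfl
    intro s _
    rw [← Finset.sum_filter, Finset.filter_filter]
    have : ∀ S ∈ Finset.univ.filter
        (fun S : Finset (Fin ℓ) => S.card = s ∧ ¬ Decodable ℓ Kv i S),
        z ^ S.card = z ^ s := by
      intro S hS
      rw [(Finset.mem_filter.mp hS).2.1]
    rw [Finset.sum_congr rfl this, Finset.sum_const, nsmul_eq_mul]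
  -- N 0 = 0
  have hN0 : N 0 = 0 := by
    rw [hN]
    simp only []
    apply Finset.card_eq_zero.mpr
    rw [Finset.filter_false_of_mem]
    intro S _
    rintro ⟨hc, hd⟩
    rw [Finset.card_eq_zero.mp hc] at hd
    exact hd (dec_empty ℓ K i)
  -- constants
  set C : ℝ := 6 * (ℓ:ℝ)^2 * ((ℓ:ℝ)+1) * (2/3:ℝ)^((i:ℕ)+1) with hC
  have hCpos : 0 < C := by positivity
  set r : ℝ := 3/2 * (ℓ:ℝ) * z with hr
  have hr0 : 0 < r := by positivity
  have hr12 : r ≤ 1/12 := by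
    have : z < 1/(ℓ:ℝ)^2 := hz1
    have h2 : (ℓ:ℝ) * z < 1/(ℓ:ℝ) := by
      rw [lt_div_iff₀ hℓ0]
      calc (ℓ:ℝ) * z * ℓ = z * (ℓ:ℝ)^2 := by ring
        _ < (1/(ℓ:ℝ)^2) * (ℓ:ℝ)^2 := by
            apply mul_lt_mul_of_pos_right hz1 (by positivity)
        _ = 1 := by field_simp
    have h3 : 1/(ℓ:ℝ) ≤ 1/18 := by
      apply one_div_le_one_div_of_le <;> linarith
    rw [hr]; nlinarith
  -- Step 2: term bound for s+1
  have step2 : ∀ s ∈ Finset.range ℓ, (N (s+1) : ℝ) * z ^ (s+1) ≤ C * r * (1/12)^s := by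
    intro s hs
    have hs' : s + 1 ≤ ℓ := Finset.mem_range.mp hs
    have hchoose : (0:ℝ) < (Nat.choose ℓ (s+1) : ℝ) := by
      exact_mod_cast Nat.choose_pos hs'
    have hq' := hq i (s+1) (by omega) hs'
    have hNle : (N (s+1) : ℝ) ≤
        6 * (ℓ:ℝ)^2 * ((ℓ:ℝ)+1) * (2/3:ℝ)^(((i:ℕ)+1 : ℤ) - ((s+1:ℕ) : ℤ)) *
          (Nat.choose ℓ (s+1) : ℝ) := by
      have : (N (s+1) : ℝ) = qis ℓ Kv i (s+1) * (Nat.choose ℓ (s+1) : ℝ) := by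
        rw [qis, div_mul_cancel₀ _ (ne_of_gt hchoose)]
      rw [this]
      exact mul_le_mul_of_nonneg_right hq' (le_of_lt hchoose)
    have hzpow : (2/3:ℝ)^(((i:ℕ)+1 : ℤ) - ((s+1:ℕ) : ℤ)) =
        (2/3:ℝ)^((i:ℕ)+1) * (3/2:ℝ)^(s+1) := by
      rw [zpow_sub₀ (by norm_num : (2/3:ℝ) ≠ 0),
        show ((i:ℕ)+1 : ℤ) = (((i:ℕ)+1 : ℕ) : ℤ) by push_cast; ring,
        zpow_natCast, zpow_natCast, div_eq_mul_inv, ← inv_pow]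
      norm_num
    have hchoose_le : (Nat.choose ℓ (s+1) : ℝ) ≤ (ℓ:ℝ)^(s+1) := by
      exact_mod_cast Nat.choose_le_pow ℓ (s+1)
    have hzp : (0:ℝ) ≤ z ^ (s+1) := by positivity
    calc (N (s+1) : ℝ) * z ^ (s+1)
        ≤ (6 * (ℓ:ℝ)^2 * ((ℓ:ℝ)+1) * ((2/3:ℝ)^((i:ℕ)+1) * (3/2:ℝ)^(s+1)) * (ℓ:ℝ)^(s+1)) *
          z ^ (s+1) := by
          apply mul_le_mul_of_nonneg_right _ hzp
          rw [← hzpow]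
          refine hNle.trans ?_
          apply mul_le_mul_of_nonneg_left hchoose_le
          positivity
      _ = C * r^(s+1) := by
          rw [hC, hr, mul_pow, mul_pow]
          ring
      _ = C * (r * r^s) := by ring
      _ ≤ C * (r * (1/12)^s) := by
          apply mul_le_mul_of_nonneg_left _ (le_of_lt hCpos)
          apply mul_le_mul_of_nonneg_left _ (le_of_lt hr0)
          exact pow_le_pow_left₀ (le_of_lt hr0) hr12 s
      _ = C * r * (1/12)^s := by ring
  -- geometric sum bound
  have geo : ∑ s ∈ Finset.range ℓ, ((1:ℝ)/12)^s ≤ 12/11 := by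
    rw [geom_sum_eq (by norm_num : (1/12:ℝ) ≠ 1)]
    have h1 : (0:ℝ) ≤ (1/12:ℝ)^ℓ := by positivity
    rw [div_le_iff_of_neg (by norm_num : (1/12:ℝ) - 1 < 0)]
    nlinarith
  -- combine
  have step3 : fK ℓ Kv i z ≤ C * r * (12/11) := by
    refine step1.trans ?_
    rw [Finset.sum_range_succ']
    have : (N 0 : ℝ) * z ^ 0 = 0 := by rw [hN0]; simp
    rw [this, add_zero]
    calc ∑ s ∈ Finset.range ℓ, (N (s+1) : ℝ) * z ^ (s+1)
        ≤ ∑ s ∈ Finset.range ℓ, C * r * (1/12)^s := Finset.sum_le_sum step2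
      _ = C * r * ∑ s ∈ Finset.range ℓ, ((1:ℝ)/12)^s := by rw [Finset.mul_sum]
      _ ≤ C * r * (12/11) := by
          apply mul_le_mul_of_nonneg_left geo (by positivity)
  refine step3.trans_lt ?_
  rw [hC, hr]
  have hp : (0:ℝ) < (2/3:ℝ)^((i:ℕ)+1) := by positivity
  have key : 6 * (ℓ:ℝ)^2 * ((ℓ:ℝ)+1) * (3/2 * (ℓ:ℝ)) * (12/11) < 38 * (ℓ:ℝ)^4 := by
    nlinarith [sq_nonneg ((ℓ:ℝ)), pow_pos hℓ0 3, pow_pos hℓ0 4]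
  calc 6 * (ℓ:ℝ)^2 * ((ℓ:ℝ)+1) * (2/3:ℝ)^((i:ℕ)+1) * (3/2 * (ℓ:ℝ) * z) * (12/11)
      = (6 * (ℓ:ℝ)^2 * ((ℓ:ℝ)+1) * (3/2 * (ℓ:ℝ)) * (12/11)) * ((2/3:ℝ)^((i:ℕ)+1) * z) := by
        ring
    _ < (38 * (ℓ:ℝ)^4) * ((2/3:ℝ)^((i:ℕ)+1) * z) := by
        apply mul_lt_mul_of_pos_right key (by positivity)
    _ = 38 * (ℓ:ℝ)^4 * (2/3:ℝ)^((i:ℕ)+1) * z := by ring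


end
end
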